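/- For every refining Möbius map μ and every infinite stream α of digits from {L, R, M}, there exist n ∈ ℕ and φ ∈ {L, R, M} such that (μ ∘ α₀ ∘ α₁ ∘ ... ∘ α_{n-1})([-1,1]) ⊆ φ([-1,1]). -/

import Mathlib

noncomputable def digitL : ℝ → ℝ := fun x => (x - 1) / (x + 3)
noncomputable def digitR : ℝ → ℝ := fun x => (x + 1) / (-x + 3)
noncomputable def digitM : ℝ → ℝ := fun x => x / 3

noncomputable def compStream (α : ℕ → ℝ → ℝ) : ℕ → ℝ → ℝ
  | 0 => id
  | k + 1 => compStream α k ∘ α k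

/-
Write a Möbius map in the coordinates `1 + x`, `1 - x`, as
`x ↦ (u (1 + x) + v (1 - x)) / (p (1 + x) + q (1 - x))`. Then `L`, `R`, `M` act on the right
on `(u, v)` and on `(p, q)` by the matrices `(1 0; 1 1)`, `(1 1; 0 1)`, `(2 1; 1 2)`, so every
composition of digits has this form with `p, q > 0`. Its image of `[-1, 1]` is the interval
between `v / q` and `u / p`, of length `δ / (p q)` with `δ = u q - v p`, and each digit raises
`p q / δ` by at least `1/2`, so after `n` digits the image has length at most `2 / (n + 1)`.
A refining map is Lipschitz on `[-1, 1]`, so eventually the image under `μ` is an interval in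
`[-1, 1]` of length at most `1/3`, and such an interval lies in `[-1, 0] = L [-1, 1]`, in
`[0, 1] = R [-1, 1]` or in `[-1/3, 1/3] = M [-1, 1]`.
-/

open Set

lemma continuousOn_digitL : ContinuousOn digitL (Icc (-1) 1) :=
  ContinuousOn.div (by fun_prop) (by fun_prop) fun x hx => by linarith [hx.1]

lemma continuousOn_digitR : ContinuousOn digitR (Icc (-1) 1) :=
  ContinuousOn.div (by fun_prop) (by fun_prop) fun x hx => by linarith [hx.2]

lemma Icc_subset_image_digitL : Icc (-1) 0 ⊆ digitL '' Icc (-1) 1 := by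
  have h := intermediate_value_Icc (by norm_num) continuousOn_digitL
  rwa [show digitL (-1) = -1 by norm_num [digitL], show digitL 1 = 0 by norm_num [digitL]] at h

lemma Icc_subset_image_digitR : Icc 0 1 ⊆ digitR '' Icc (-1) 1 := by
  have h := intermediate_value_Icc (by norm_num) continuousOn_digitR
  rwa [show digitR (-1) = 0 by norm_num [digitR], show digitR 1 = 1 by norm_num [digitR]] at h

lemma Icc_subset_image_digitM : Icc (-(1 / 3)) (1 / 3) ⊆ digitM '' Icc (-1) 1 := by
  have h := intermediate_value_Icc (f := digitM) (by norm_num : (-1 : ℝ) ≤ 1)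
    (continuous_id.div_const 3).continuousOn
  rwa [show digitM (-1) = -(1 / 3) by norm_num [digitM], show digitM 1 = 1 / 3 by norm_num [digitM]]
    at h

lemma exists_digit_image_superset {S : Set ℝ} (hS : S ⊆ Icc (-1) 1)
    (hdiam : ∀ s ∈ S, ∀ t ∈ S, dist s t ≤ 1 / 3) :
    ∃ φ ∈ ({digitL, digitR, digitM} : Set (ℝ → ℝ)), S ⊆ φ '' Icc (-1) 1 := by
  by_cases hnonneg : ∀ s ∈ S, 0 ≤ s
  · exact ⟨digitR, by simp, fun s hs => Icc_subset_image_digitR ⟨hnonneg s hs, (hS hs).2⟩⟩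
  by_cases hnonpos : ∀ s ∈ S, s ≤ 0
  · exact ⟨digitL, by simp, fun s hs => Icc_subset_image_digitL ⟨(hS hs).1, hnonpos s hs⟩⟩
  simp only [not_forall, not_le, exists_prop] at hnonneg hnonpos
  obtain ⟨s₁, hs₁, hneg⟩ := hnonneg
  obtain ⟨s₂, hs₂, hpos⟩ := hnonpos
  refine ⟨digitM, by simp, fun s hs => Icc_subset_image_digitM ⟨?_, ?_⟩⟩
  · linarith [(abs_le.1 (Real.dist_eq s s₂ ▸ hdiam s hs s₂ hs₂)).1]
  · linarith [(abs_le.1 (Real.dist_eq s s₁ ▸ hdiam s hs s₁ hs₁)).2]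

lemma exists_lipschitzOnWith_of_denom_ne_zero {a b c d : ℝ}
    (hb : ∀ x ∈ Icc (-1 : ℝ) 1, c * x + d ≠ 0) :
    ∃ K, LipschitzOnWith K (fun x => (a * x + b) / (c * x + d)) (Icc (-1) 1) :=
  (ContDiffOn.div (by fun_prop) (by fun_prop) hb).exists_lipschitzOnWith one_ne_zero
    (convex_Icc _ _) isCompact_Icc

lemma mapsTo_digit {φ : ℝ → ℝ} (hφ : φ = digitL ∨ φ = digitR ∨ φ = digitM) :
    MapsTo φ (Icc (-1) 1) (Icc (-1) 1) := by
  rintro x ⟨hx₁, hx₂⟩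
  rcases hφ with rfl | rfl | rfl
  · have : 0 < x + 3 := by linarith
    exact ⟨by rw [digitL, le_div_iff₀ this]; linarith, by rw [digitL, div_le_iff₀ this]; linarith⟩
  · have : 0 < -x + 3 := by linarith
    exact ⟨by rw [digitR, le_div_iff₀ this]; linarith, by rw [digitR, div_le_iff₀ this]; linarith⟩
  · exact ⟨by rw [digitM]; linarith, by rw [digitM]; linarith⟩

lemma mapsTo_compStream {α : ℕ → ℝ → ℝ} (hα : ∀ i, α i = digitL ∨ α i = digitR ∨ α i = digitM)
    (n : ℕ) : MapsTo (compStream α n) (Icc (-1) 1) (Icc (-1) 1) := by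
  induction n with
  | zero => exact mapsTo_id _
  | succ n ih => exact ih.comp (mapsTo_digit (hα n))

noncomputable def mobius (u v p q x : ℝ) : ℝ :=
  (u * (1 + x) + v * (1 - x)) / (p * (1 + x) + q * (1 - x))

lemma mobius_eq_of_one_add_of_one_sub {u v p q y k T W : ℝ} (hk : k ≠ 0)
    (hadd : 1 + y = k * T) (hsub : 1 - y = k * W) :
    mobius u v p q y = (u * T + v * W) / (p * T + q * W) := by
  rw [mobius, hadd, hsub, show u * (k * T) + v * (k * W) = k * (u * T + v * W) by ring,
    show p * (k * T) + q * (k * W) = k * (p * T + q * W) by ring, mul_div_mul_left _ _ hk]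

lemma mobius_digitL {u v p q x : ℝ} (hx : x + 3 ≠ 0) :
    mobius u v p q (digitL x) = mobius (u + v) v (p + q) q x := by
  rw [mobius_eq_of_one_add_of_one_sub (k := 2 / (x + 3)) (T := 1 + x) (W := (1 + x) + (1 - x))
    (div_ne_zero two_ne_zero hx) (by rw [digitL]; field_simp; ring)
    (by rw [digitL]; field_simp; ring), mobius]
  congr 1 <;> ring

lemma mobius_digitR {u v p q x : ℝ} (hx : -x + 3 ≠ 0) :
    mobius u v p q (digitR x) = mobius u (u + v) p (p + q) x := by
  rw [mobius_eq_of_one_add_of_one_sub (k := 2 / (-x + 3)) (T := (1 + x) + (1 - x)) (W := 1 - x)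
    (div_ne_zero two_ne_zero hx) (by rw [digitR]; field_simp; ring)
    (by rw [digitR]; field_simp; ring), mobius]
  congr 1 <;> ring

lemma mobius_digitM {u v p q x : ℝ} :
    mobius u v p q (digitM x) = mobius (2 * u + v) (u + 2 * v) (2 * p + q) (p + 2 * q) x := by
  rw [mobius_eq_of_one_add_of_one_sub (k := 1 / 3) (T := 2 * (1 + x) + (1 - x))
    (W := (1 + x) + 2 * (1 - x)) (by norm_num) (by rw [digitM]; ring) (by rw [digitM]; ring),
    mobius]
  congr 1 <;> ring

/-- For `δ = u q - v p`, the bounds `δ ≤ 2 p²`, `δ ≤ 2 q²` are what make each digit raise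
`p q / δ` by at least `1/2`. -/
structure MobiusBound (n : ℕ) (u v p q : ℝ) : Prop where
  p_pos : 0 < p
  q_pos : 0 < q
  det_nonneg : 0 ≤ u * q - v * p
  det_le_p_sq : u * q - v * p ≤ 2 * p ^ 2
  det_le_q_sq : u * q - v * p ≤ 2 * q ^ 2
  succ_mul_det_le : (n + 1) * (u * q - v * p) ≤ 2 * p * q

namespace MobiusBound

variable {n : ℕ} {u v p q : ℝ}

lemma digitL (h : MobiusBound n u v p q) : MobiusBound (n + 1) (u + v) v (p + q) q := by
  obtain ⟨hp, hq, h₀, h₁, h₂, h₃⟩ := h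
  refine ⟨by linarith, hq, by linarith, by nlinarith, by linarith, ?_⟩
  push_cast
  nlinarith

lemma digitR (h : MobiusBound n u v p q) : MobiusBound (n + 1) u (u + v) p (p + q) := by
  obtain ⟨hp, hq, h₀, h₁, h₂, h₃⟩ := h
  refine ⟨hp, by linarith, by linarith, by linarith, by nlinarith, ?_⟩
  push_cast
  nlinarith

lemma digitM (h : MobiusBound n u v p q) :
    MobiusBound (n + 1) (2 * u + v) (u + 2 * v) (2 * p + q) (p + 2 * q) := by
  obtain ⟨hp, hq, h₀, h₁, h₂, h₃⟩ := h
  refine ⟨by linarith, by linarith, by nlinarith, by nlinarith, by nlinarith, ?_⟩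
  push_cast
  nlinarith

lemma mobius_mem_Icc (h : MobiusBound n u v p q) {x : ℝ} (hx : x ∈ Icc (-1) 1) :
    mobius u v p q x ∈ Icc (v / q) (u / p) := by
  obtain ⟨hp, hq, h₀, -, -, -⟩ := h
  obtain ⟨hx₁, hx₂⟩ := hx
  have hden : 0 < p * (1 + x) + q * (1 - x) := by
    rcases le_total p q with hpq | hqp
    · nlinarith [mul_nonneg (sub_nonneg.2 hpq) (by linarith : (0 : ℝ) ≤ 1 - x)]
    · nlinarith [mul_nonneg (sub_nonneg.2 hqp) (by linarith : (0 : ℝ) ≤ 1 + x)]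
  constructor
  · rw [mobius, div_le_div_iff₀ hq hden]
    nlinarith
  · rw [mobius, div_le_div_iff₀ hden hp]
    nlinarith

lemma dist_mobius_le (h : MobiusBound n u v p q) {x y : ℝ} (hx : x ∈ Icc (-1) 1)
    (hy : y ∈ Icc (-1) 1) : dist (mobius u v p q x) (mobius u v p q y) ≤ 2 / (n + 1) := by
  refine (Real.dist_le_of_mem_Icc (h.mobius_mem_Icc hx) (h.mobius_mem_Icc hy)).trans ?_
  rw [div_sub_div _ _ h.p_pos.ne' h.q_pos.ne',
    div_le_div_iff₀ (mul_pos h.p_pos h.q_pos) (by positivity)]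
  nlinarith [h.succ_mul_det_le]

end MobiusBound

lemma exists_mobius_comp_digit {φ : ℝ → ℝ} (hφ : φ = digitL ∨ φ = digitR ∨ φ = digitM)
    {n : ℕ} {u v p q : ℝ} (h : MobiusBound n u v p q) :
    ∃ u' v' p' q', MobiusBound (n + 1) u' v' p' q' ∧
      ∀ x ∈ Icc (-1 : ℝ) 1, mobius u v p q (φ x) = mobius u' v' p' q' x := by
  rcases hφ with rfl | rfl | rfl
  · exact ⟨_, _, _, _, h.digitL, fun x hx => mobius_digitL (by linarith [hx.1])⟩
  · exact ⟨_, _, _, _, h.digitR, fun x hx => mobius_digitR (by linarith [hx.2])⟩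
  · exact ⟨_, _, _, _, h.digitM, fun x _ => mobius_digitM⟩

lemma exists_mobius_compStream {α : ℕ → ℝ → ℝ}
    (hα : ∀ i, α i = digitL ∨ α i = digitR ∨ α i = digitM) (n : ℕ) :
    ∃ u v p q, MobiusBound n u v p q ∧
      ∀ x ∈ Icc (-1 : ℝ) 1, compStream α n x = mobius u v p q x := by
  induction n with
  | zero => exact ⟨1, -1, 1, 1, ⟨by norm_num, by norm_num, by norm_num, by norm_num, by norm_num,
      by norm_num⟩, fun x _ => by simp only [compStream, id, mobius]; ring⟩
  | succ n ih =>
    obtain ⟨u, v, p, q, h, hΦ⟩ := ih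
    obtain ⟨u', v', p', q', h', hstep⟩ := exists_mobius_comp_digit (hα n) h
    exact ⟨u', v', p', q', h', fun x hx => by
      rw [compStream, Function.comp_apply, hΦ _ (mapsTo_digit (hα n) hx), hstep x hx]⟩

lemma dist_compStream_le {α : ℕ → ℝ → ℝ}
    (hα : ∀ i, α i = digitL ∨ α i = digitR ∨ α i = digitM) (n : ℕ) {x y : ℝ}
    (hx : x ∈ Icc (-1) 1) (hy : y ∈ Icc (-1) 1) :
    dist (compStream α n x) (compStream α n y) ≤ 2 / (n + 1) := by
  obtain ⟨u, v, p, q, h, hΦ⟩ := exists_mobius_compStream hα n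
  rw [hΦ x hx, hΦ y hy]
  exact h.dist_mobius_le hx hy

theorem refining_eventually_emits (a b c d : ℝ)
    (hb : ∀ x ∈ Set.Icc (-1 : ℝ) 1, c * x + d ≠ 0)
    (hr : ∀ x ∈ Set.Icc (-1 : ℝ) 1, (a * x + b) / (c * x + d) ∈ Set.Icc (-1 : ℝ) 1)
    (α : ℕ → ℝ → ℝ)
    (hα : ∀ i, α i = digitL ∨ α i = digitR ∨ α i = digitM) :
    ∃ n : ℕ, ∃ φ ∈ ({digitL, digitR, digitM} : Set (ℝ → ℝ)),
      ∀ x ∈ Set.Icc (-1 : ℝ) 1,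
        (a * compStream α n x + b) / (c * compStream α n x + d) ∈
          φ '' Set.Icc (-1 : ℝ) 1 := by
  obtain ⟨K, hK⟩ := exists_lipschitzOnWith_of_denom_ne_zero (a := a) (b := b) hb
  obtain ⟨n, hn⟩ := exists_nat_ge (6 * K : ℝ)
  have hΦ := mapsTo_compStream hα n
  obtain ⟨φ, hφ, hsub⟩ := exists_digit_image_superset
    (S := (fun x => (a * compStream α n x + b) / (c * compStream α n x + d)) '' Icc (-1) 1)
    (by rintro _ ⟨x, hx, rfl⟩; exact hr _ (hΦ hx))
    (by
      rintro _ ⟨x, hx, rfl⟩ _ ⟨y, hy, rfl⟩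
      calc _ ≤ K * dist (compStream α n x) (compStream α n y) :=
            hK.dist_le_mul _ (hΦ hx) _ (hΦ hy)
        _ ≤ K * (2 / (n + 1)) := by gcongr; exact dist_compStream_le hα n hx hy
        _ ≤ 1 / 3 := by
          rw [mul_div_assoc', div_le_div_iff₀ (by positivity) (by norm_num)]
          linarith)
  exact ⟨n, φ, hφ, fun x hx => hsub ⟨x, hx, rfl⟩⟩
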